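/- In the polynomial algebra ℝ[x_k, y_k : k ∈ ℕ] with derivation D (D x_k = x_{k+1}, D y_k = y_{k+1}) and covariant derivative ∇_a b = a·Db + (1/2)·y₀·a·b, writing x = x₀, one has 2·∇_{∇_x(∇_x x)} x − ∇_x(∇_{∇_x x} x) = ∇_{∇_{∇_x x} x} x. -/
import Mathlib


open MvPolynomial

/-- The polynomial algebra `ℝ[x_k, y_k : k ∈ ℕ]`: `Sum.inl k` is `x_k`, `Sum.inr k` is `y_k`. -/
noncomputable abbrev MIA : Type := MvPolynomial (ℕ ⊕ ℕ) ℝ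

/-- The derivation with `D x_k = x_{k+1}` and `D y_k = y_{k+1}`. -/
noncomputable def Dmia : Derivation ℝ MIA MIA :=
  mkDerivation ℝ fun v =>
    match v with
    | Sum.inl k => X (Sum.inl (k + 1))
    | Sum.inr k => X (Sum.inr (k + 1))

/-- The covariant derivative `∇_a b = a·Db + (1/2)·y₀·a·b`. -/
noncomputable def nablaMIA (a b : MIA) : MIA :=
  a * Dmia b + (1 / 2 : ℝ) • (X (Sum.inr 0) * a * b)

lemma DmiaX (v : ℕ ⊕ ℕ) : Dmia (X v) = match v with
    | Sum.inl k => X (Sum.inl (k + 1))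
    | Sum.inr k => X (Sum.inr (k + 1)) := by
  simp [Dmia, mkDerivation_X]

lemma DmiaC (r : ℝ) : Dmia (C r) = 0 := by
  rw [← algebraMap_eq]; exact Derivation.map_algebraMap _ _

theorem stmt_9 (x : MIA) (hx : x = X (Sum.inl 0)) :
    2 • nablaMIA (nablaMIA x (nablaMIA x x)) x - nablaMIA x (nablaMIA (nablaMIA x x) x) =
      nablaMIA (nablaMIA (nablaMIA x x) x) x := by
  subst hx
  simp only [nablaMIA, map_add, Derivation.leibniz, Derivation.map_smul, DmiaX,
    Algebra.smul_def, algebraMap_eq, two_smul, DmiaC, Algebra.algebraMap_self_apply, map_ofNat,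
    mul_zero]
  ring
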